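/- For every finite group G and every characteristic subgroup N of G, 𝔉(G) ≤ 𝔉(N) · 𝔉(G/N). -/

import Mathlib

/-- The bijective affine map `A_{x,α} : g ↦ x * α g` as a permutation of `G`. -/
def Aff {G : Type*} [Group G] (x : G) (α : G ≃* G) : Equiv.Perm G :=
  α.toEquiv.trans (Equiv.mulLeft x)

/-- `𝔉(G)`: the maximum over automorphisms `α` of `G` of the lcm over `x ∈ G` of the
orders of the permutations `A_{x,α}`. -/
noncomputable def Frak (G : Type*) [Group G] [Fintype G] [DecidableEq G] : ℕ :=
  Finset.univ.sup fun α : G ≃* G => Finset.univ.lcm fun x : G => orderOf (Aff x α)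

/-!
Fix `α ∈ Aut G` and `x ∈ G`, and write `A = A_{x,α}`. Since `N` is characteristic, `A` descends to
the affine map `A_{xN,ᾱ}` of `G ⧸ N`, so for `D = lcm_z ord(A_{z,ᾱ})` the power `A ^ D` maps every
coset `gN` to itself. Moreover `A ^ D = A_{y,α^D}` is again affine, and transported to `N` along
`n ↦ g n` it becomes the affine map `A_{g⁻¹ A^D(g), β}` of `N`, with `β` the restriction of `α ^ D`.
Hence `A ^ (D L) = 1` for `L = lcm_n ord(A_{n,β})`, and `D ≤ 𝔉(G ⧸ N)`, `L ≤ 𝔉(N)`.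
-/

open Finset

section Affine

variable {G : Type*} [Group G]

lemma Aff_apply (x : G) (α : G ≃* G) (g : G) : Aff x α g = x * α g := rfl

lemma Aff_mul (x y : G) (α β : G ≃* G) : Aff x α * Aff y β = Aff (x * α y) (α * β) := by
  ext g
  simp [Aff_apply, mul_assoc]

lemma exists_Aff_pow_eq (x : G) (α : G ≃* G) (k : ℕ) : ∃ y, Aff x α ^ k = Aff y (α ^ k) := by
  induction k with
  | zero => exact ⟨1, by ext g; simp [Aff_apply]⟩
  | succ k ih =>
    obtain ⟨y, hy⟩ := ih
    exact ⟨x * α y, by rw [pow_succ', hy, Aff_mul, pow_succ']⟩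

lemma mk_Aff_pow {N : Subgroup G} [N.Normal] (α : G ≃* G) (hα : N.map α.toMonoidHom = N)
    (x g : G) (k : ℕ) :
    (((Aff x α ^ k) g : G) : G ⧸ N) = (Aff (x : G ⧸ N) (QuotientGroup.congr N N α hα) ^ k) g := by
  have hsemi : Function.Semiconj ((↑) : G → G ⧸ N) (Aff x α)
      (Aff (x : G ⧸ N) (QuotientGroup.congr N N α hα)) := fun _ => rfl
  simpa only [Equiv.Perm.coe_pow] using hsemi.iterate_right k g

lemma inv_mul_Aff_pow_mem {N : Subgroup G} [N.Normal] (α : G ≃* G)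
    (hα : N.map α.toMonoidHom = N) (x : G) {k : ℕ}
    (hk : Aff (x : G ⧸ N) (QuotientGroup.congr N N α hα) ^ k = 1) (g : G) :
    g⁻¹ * (Aff x α ^ k) g ∈ N := by
  rw [← QuotientGroup.eq, mk_Aff_pow α hα, hk, Equiv.Perm.one_apply]

lemma Aff_pow_eq_one_of_inv_mul_mem {N : Subgroup G} (y : G) (γ : G ≃* G) (γN : N ≃* N)
    (hγ : ∀ n : N, (γN n : G) = γ n) (hy : ∀ g, g⁻¹ * Aff y γ g ∈ N) {L : ℕ}
    (hL : ∀ n : N, Aff n γN ^ L = 1) : Aff y γ ^ L = 1 := by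
  ext g
  have hsemi : Function.Semiconj (fun n : N => g * n) (Aff ⟨_, hy g⟩ γN) (Aff y γ) := by
    intro n
    simp only [Aff_apply, Subgroup.coe_mul, hγ, map_mul]
    group
  have hiter := hsemi.iterate_right L 1
  simp only [← Equiv.Perm.coe_pow, hL, Equiv.Perm.one_apply, OneMemClass.coe_one,
    mul_one] at hiter
  exact hiter.symm

end Affine

section Exponent

variable {G : Type*} [Group G] [Fintype G]

noncomputable def affExponent (α : G ≃* G) : ℕ :=
  univ.lcm fun x : G => orderOf (Aff x α)

lemma affExponent_le_Frak [DecidableEq G] (α : G ≃* G) : affExponent α ≤ Frak G :=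
  le_sup (f := affExponent) (mem_univ α)

lemma affExponent_pos (α : G ≃* G) : 0 < affExponent α :=
  Nat.pos_of_ne_zero fun h => by
    obtain ⟨x, -, hx⟩ := lcm_eq_zero_iff.mp h
    exact (orderOf_pos (Aff x α)).ne' hx

lemma Aff_pow_affExponent (x : G) (α : G ≃* G) : Aff x α ^ affExponent α = 1 :=
  orderOf_dvd_iff_pow_eq_one.mp (dvd_lcm (mem_univ x))

lemma affExponent_dvd {α : G ≃* G} {k : ℕ} (h : ∀ x, Aff x α ^ k = 1) : affExponent α ∣ k :=
  lcm_dvd fun x _ => orderOf_dvd_of_pow_eq_one (h x)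

end Exponent

def Subgroup.restrictMulEquiv {G : Type*} [Group G] (N : Subgroup G) [N.Characteristic]
    (α : G ≃* G) : N ≃* N :=
  (α.subgroupMap N).trans (MulEquiv.subgroupCongr (Subgroup.characteristic_iff_map_eq.mp ‹_› α))

theorem stmt_9 {G : Type*} [Group G] [Fintype G] [DecidableEq G]
    (N : Subgroup G) [N.Characteristic] [DecidablePred (· ∈ N)] :
    Frak G ≤ Frak N * Frak (G ⧸ N) := by
  refine Finset.sup_le fun α _ => ?_
  have hα := Subgroup.characteristic_iff_map_eq.mp ‹N.Characteristic› α
  set D := affExponent (QuotientGroup.congr N N α hα)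
  set β := N.restrictMulEquiv (α ^ D)
  have hdvd : affExponent α ∣ D * affExponent β := affExponent_dvd fun x => by
    obtain ⟨y, hy⟩ := exists_Aff_pow_eq x α D
    have hcoset := inv_mul_Aff_pow_mem α hα x (Aff_pow_affExponent _ _)
    rw [hy] at hcoset
    rw [pow_mul, hy]
    exact Aff_pow_eq_one_of_inv_mul_mem y _ β (fun _ => rfl) hcoset (Aff_pow_affExponent · β)
  calc affExponent α ≤ D * affExponent β :=
        Nat.le_of_dvd (Nat.mul_pos (affExponent_pos _) (affExponent_pos _)) hdvd
    _ ≤ Frak (G ⧸ N) * Frak N := Nat.mul_le_mul (affExponent_le_Frak _) (affExponent_le_Frak _)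
    _ = Frak N * Frak (G ⧸ N) := mul_comm _ _
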